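/- Let a be an element of a unital *-ring R with inner inverse a⁻. Then the following are equivalent: (i) a is Moore-Penrose invertible; (ii) a a* + 1 − a a⁻ is invertible; (iii) a* a + 1 − a⁻ a is invertible; (iv) a a* a a⁻ + 1 − a a⁻ is invertible; (v) a⁻ a a* a + 1 − a⁻ a is invertible. -/
import Mathlib

/-- `x` is a Moore-Penrose inverse of `a`. -/
def IsMPInverse {R : Type*} [Ring R] [StarRing R] (a x : R) : Prop :=
  a * x * a = a ∧ x * a * x = x ∧ star (a * x) = a * x ∧ star (x * a) = x * a

section Aux
variable {R : Type*} [Ring R] [StarRing R]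

private lemma mp_star' {a x : R} (h : IsMPInverse a x) : IsMPInverse (star a) (star x) := by
  obtain ⟨h1, h2, h3, h4⟩ := h
  refine ⟨?_, ?_, ?_, ?_⟩
  · rw [← star_mul, ← star_mul, ← mul_assoc, h1]
  · rw [← star_mul, ← star_mul, ← mul_assoc, h2]
  · rw [← star_mul, star_star]; exact h4.symm
  · rw [← star_mul, star_star]; exact h3.symm

private lemma mp_ex_star_iff {a : R} :
    (∃ x, IsMPInverse a x) ↔ (∃ x, IsMPInverse (star a) x) := by
  constructor
  · rintro ⟨x, h⟩; exact ⟨star x, mp_star' h⟩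
  · rintro ⟨x, h⟩
    have := mp_star' h
    rw [star_star] at this
    exact ⟨star x, this⟩

private lemma mp_of_reps {a s t : R} (h1 : a * star a * s = a) (h2 : t * star a * a = a) :
    ∃ x, IsMPInverse a x := by
  have k1 : star s * (a * star a) = star a := by
    have := congrArg star h1
    simpa [star_mul, star_star, mul_assoc] using this
  have k2 : star a * (a * star t) = star a := by
    have := congrArg star h2
    simpa [star_mul, star_star, mul_assoc] using this
  have k3 : a * star t = t * star a := by
    calc a * star t = t * star a * a * star t := by rw [h2]
    _ = t * (star a * (a * star t)) := by simp [mul_assoc]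
    _ = t * star a := by rw [k2]
  have k4 : star s * a = star a * s := by
    calc star s * a = star s * (a * star a * s) := by rw [h1]
    _ = star s * (a * star a) * s := by simp [mul_assoc]
    _ = star a * s := by rw [k1]
  set x := star s * (a * star t) with hx
  have hax : a * x = t * star a := by
    calc a * x = a * (star s * a) * star t := by simp [hx, mul_assoc]
    _ = a * star t := by rw [k4, ← mul_assoc, h1]
    _ = t * star a := k3
  have hxa : x * a = star s * a := by
    calc x * a = star s * ((a * star t) * a) := by simp [hx, mul_assoc]
    _ = star s * (t * star a * a) := by rw [k3]
    _ = star s * a := by rw [h2]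
  refine ⟨x, ?_, ?_, ?_, ?_⟩
  · rw [hax, h2]
  · rw [hxa, mul_assoc, hax, ← k3, hx]
  · rw [hax, star_mul, star_star, k3]
  · rw [hxa, star_mul, star_star, k4]

private lemma unit_fwd {a c x : R} (hc : a * c * a = a)
    (h1 : a * x * a = a) (h2 : x * a * x = x)
    (h3 : star (a * x) = a * x) (h4 : star (x * a) = x * a) :
    (a * star a + 1 - a * c) * (star x * x * (a * c) + 1 - a * x) = 1 ∧
    (star x * x * (a * c) + 1 - a * x) * (a * star a + 1 - a * c) = 1 ∧
    (a * star a * a * c + 1 - a * c) * (star x * x * (a * c) + 1 - a * c) = 1 ∧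
    (star x * x * (a * c) + 1 - a * c) * (a * star a * a * c + 1 - a * c) = 1 := by
  have r1 : a * (x * a) = a := by rw [← mul_assoc, h1]
  have r1' : ∀ y : R, a * (x * (a * y)) = a * y := fun y => by
    rw [← mul_assoc, ← mul_assoc, h1]
  have r2 : x * (a * x) = x := by rw [← mul_assoc, h2]
  have r2' : ∀ y : R, x * (a * (x * y)) = x * y := fun y => by
    rw [← mul_assoc, ← mul_assoc, h2]
  have r3 : a * (c * a) = a := by rw [← mul_assoc, hc]
  have r3' : ∀ y : R, a * (c * (a * y)) = a * y := fun y => by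
    rw [← mul_assoc, ← mul_assoc, hc]
  have r4 : star x * star a = a * x := by rw [← star_mul, h3]
  have r4' : ∀ y : R, star x * (star a * y) = a * (x * y) := fun y => by
    rw [← mul_assoc, r4, mul_assoc]
  have r5 : star a * star x = x * a := by rw [← star_mul, h4]
  have r5' : ∀ y : R, star a * (star x * y) = x * (a * y) := fun y => by
    rw [← mul_assoc, r5, mul_assoc]
  have r6 : x * (a * star a) = star a := by
    rw [← mul_assoc, ← h4, ← star_mul, ← mul_assoc, h1]
  have r6' : ∀ y : R, x * (a * (star a * y)) = star a * y := fun y => by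
    rw [← mul_assoc, ← mul_assoc, mul_assoc x a, r6]
  have r7 : star a * (a * x) = star a := by
    rw [← h3, ← star_mul, h1]
  have r7' : ∀ y : R, star a * (a * (x * y)) = star a * y := fun y => by
    rw [← mul_assoc, ← mul_assoc, mul_assoc (star a) a, r7]
  have r9 : a * (x * star x) = star x := by
    rw [← mul_assoc, ← h3, ← star_mul, r2]
  have r9' : ∀ y : R, a * (x * (star x * y)) = star x * y := fun y => by
    rw [← mul_assoc, ← mul_assoc, mul_assoc a x, r9]
  have r8 : a * (c * star x) = star x := by
    conv_lhs => rw [← r9]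
    rw [r3', r9]
  have r8' : ∀ y : R, a * (c * (star x * y)) = star x * y := fun y => by
    rw [← mul_assoc, ← mul_assoc, mul_assoc a c, r8]
  refine ⟨?_, ?_, ?_, ?_⟩ <;>
  · simp only [mul_add, mul_sub, add_mul, sub_mul, mul_one, one_mul, mul_assoc]
    simp only [r1, r1', r2, r2', r3, r3', r4, r4', r5, r5', r6, r6', r7, r7', r8, r8', r9, r9']
    abel

private lemma mp_iff_unit2 {a c : R} (hc : a * c * a = a) :
    (∃ x, IsMPInverse a x) ↔ IsUnit (a * star a + 1 - a * c) := by
  constructor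
  · rintro ⟨x, h1, h2, h3, h4⟩
    obtain ⟨p1, p2, -, -⟩ := unit_fwd hc h1 h2 h3 h4
    exact ⟨⟨_, _, p1, p2⟩, rfl⟩
  · rintro ⟨v, hv⟩
    set u : R := a * star a + 1 - a * c with hu
    set w : R := ((v⁻¹ : Rˣ) : R) with hw
    have huw : u * w = 1 := by rw [← hv, hw]; exact v.mul_inv
    have hwu : w * u = 1 := by rw [← hv, hw]; exact v.inv_mul
    have hacu : a * c * u = a * star a := by
      have e : a * c * u = (a * c * a) * star a + a * c - (a * c * a) * c := by
        rw [hu]; noncomm_ring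
      rw [e, hc]; abel
    have hua : u * a = a * star a * a := by
      have e : u * a = a * star a * a + a - a * c * a := by rw [hu]; noncomm_ring
      rw [e, hc]; abel
    have hs : a * star a * (w * a) = a := by
      calc a * star a * (w * a) = (a * c * u) * w * a := by rw [hacu]; noncomm_ring
      _ = a * c * (u * w) * a := by noncomm_ring
      _ = a := by rw [huw, mul_one, hc]
    have ht : (w * a) * star a * a = a := by
      calc (w * a) * star a * a = w * (u * a) := by rw [hua]; noncomm_ring
      _ = (w * u) * a := by rw [mul_assoc]
      _ = a := by rw [hwu, one_mul]
    exact mp_of_reps hs ht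

private lemma mp_iff_unit4 {a c : R} (hc : a * c * a = a) :
    (∃ x, IsMPInverse a x) ↔ IsUnit (a * star a * a * c + 1 - a * c) := by
  constructor
  · rintro ⟨x, h1, h2, h3, h4⟩
    obtain ⟨-, -, p3, p4⟩ := unit_fwd hc h1 h2 h3 h4
    exact ⟨⟨_, _, p3, p4⟩, rfl⟩
  · rintro ⟨v, hv⟩
    set u : R := a * star a * a * c + 1 - a * c with hu
    set w : R := ((v⁻¹ : Rˣ) : R) with hw
    have huw : u * w = 1 := by rw [← hv, hw]; exact v.mul_inv
    have hwu : w * u = 1 := by rw [← hv, hw]; exact v.inv_mul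
    have hacu : a * c * u = a * star a * a * c := by
      have e : a * c * u = (a * c * a) * star a * a * c + a * c - (a * c * a) * c := by
        rw [hu]; noncomm_ring
      rw [e, hc]; abel
    have hua : u * a = a * star a * a := by
      have e : u * a = a * star a * (a * c * a) + a - a * c * a := by rw [hu]; noncomm_ring
      rw [e, hc]; abel
    have hs : a * star a * (a * c * (w * a)) = a := by
      calc a * star a * (a * c * (w * a)) = (a * c * u) * w * a := by rw [hacu]; noncomm_ring
      _ = a * c * (u * w) * a := by noncomm_ring
      _ = a := by rw [huw, mul_one, hc]
    have ht : (w * a) * star a * a = a := by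
      calc (w * a) * star a * a = w * (u * a) := by rw [hua]; noncomm_ring
      _ = (w * u) * a := by rw [mul_assoc]
      _ = a := by rw [hwu, one_mul]
    exact mp_of_reps hs ht

end Aux

/-- Corollary 5.2: invertibility characterizations of the Moore-Penrose
invertibility of a regular element `a` with inner inverse `c`. -/
theorem stmt_13 {R : Type*} [Ring R] [StarRing R] (a c : R)
    (hc : a * c * a = a) :
    ((∃ x, IsMPInverse a x) ↔ IsUnit (a * star a + 1 - a * c)) ∧
    ((∃ x, IsMPInverse a x) ↔ IsUnit (star a * a + 1 - c * a)) ∧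
    ((∃ x, IsMPInverse a x) ↔ IsUnit (a * star a * a * c + 1 - a * c)) ∧
    ((∃ x, IsMPInverse a x) ↔ IsUnit (c * a * star a * a + 1 - c * a)) := by
  have hc' : star a * star c * star a = star a := by
    have := congrArg star hc
    simpa [star_mul, mul_assoc] using this
  refine ⟨mp_iff_unit2 hc, ?_, mp_iff_unit4 hc, ?_⟩
  · have h2' := mp_iff_unit2 hc'
    rw [star_star] at h2'
    have hstar : star (star a * a + 1 - c * a) = star a * a + 1 - star a * star c := by
      simp [star_sub, star_add, star_mul, star_star]
    calc (∃ x, IsMPInverse a x) ↔ (∃ x, IsMPInverse (star a) x) := mp_ex_star_iff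
    _ ↔ IsUnit (star a * a + 1 - star a * star c) := h2'
    _ ↔ IsUnit (star a * a + 1 - c * a) := by rw [← hstar, isUnit_star]
  · have h4' := mp_iff_unit4 hc'
    rw [star_star] at h4'
    have hstar : star (c * a * star a * a + 1 - c * a)
        = star a * a * star a * star c + 1 - star a * star c := by
      simp [star_sub, star_add, star_mul, star_star, mul_assoc]
    calc (∃ x, IsMPInverse a x) ↔ (∃ x, IsMPInverse (star a) x) := mp_ex_star_iff
    _ ↔ IsUnit (star a * a * star a * star c + 1 - star a * star c) := h4'
    _ ↔ IsUnit (c * a * star a * a + 1 - c * a) := by rw [← hstar, isUnit_star]
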